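/- arXiv:1805.10437 — 2 statements merged into one kernel-verified Lean document; each statement's English description precedes it below -/
import Mathlib

section
/- For every h ∈ Sⁿ⁻¹, ‖‖h‖₄⁴·h − h^⊙3‖² = ‖h‖₆⁶ − ‖h‖₄⁸ = Σ_{1≤j<k≤n} h_j² h_k² (h_j² − h_k²)². In particular, ‖h‖₄⁴·h − h^⊙3 = 0 if and only if all nonzero entries of h have the same absolute value, i.e., h has some r ∈ [n] nonzero entries each equal to ±1/√r. -/
open Matrix MeasureTheory ProbabilityTheory Finset Filter

noncomputable section

/-- The Euclidean (`ℓ²`) norm of a vector in `Fin n → ℝ`. -/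
def enorm2 {n : ℕ} (v : Fin n → ℝ) : ℝ := Real.sqrt (∑ j, v j ^ 2)

/-- The spectral norm (ℓ² operator norm) of a square real matrix. -/
def spec {n : ℕ} (A : Matrix (Fin n) (Fin n) ℝ) : ℝ := ‖Matrix.toEuclideanCLM (𝕜 := ℝ) A‖

/-- The Euclidean gradient of `F : ℝⁿ → ℝ`, given by the partial derivatives. -/
def egrad {n : ℕ} (F : (Fin n → ℝ) → ℝ) (h : Fin n → ℝ) : Fin n → ℝ :=
  fun j => fderiv ℝ F h (Pi.single j 1)

/-- The Euclidean Hessian of `F : ℝⁿ → ℝ`, given by the second partial derivatives. -/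
def ehess {n : ℕ} (F : (Fin n → ℝ) → ℝ) (h : Fin n → ℝ) : Matrix (Fin n) (Fin n) ℝ :=
  Matrix.of fun j k => fderiv ℝ (fun v => fderiv ℝ F v (Pi.single j 1)) h (Pi.single k 1)

/-- Projection `P_{h⊥} = I - h hᵀ` onto the tangent space of the unit sphere at `h`. -/
def Pperp {n : ℕ} (h : Fin n → ℝ) : Matrix (Fin n) (Fin n) ℝ := 1 - Matrix.vecMulVec h h

/-- Riemannian gradient `∇̂F(h) = P_{h⊥} ∇F(h)`. -/
def rgrad {n : ℕ} (F : (Fin n → ℝ) → ℝ) (h : Fin n → ℝ) : Fin n → ℝ :=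
  (Pperp h).mulVec (egrad F h)

/-- Riemannian Hessian `ĤF(h) = P_{h⊥} H_F(h) P_{h⊥} - ⟨∇F(h), h⟩ P_{h⊥}`. -/
def rhess {n : ℕ} (F : (Fin n → ℝ) → ℝ) (h : Fin n → ℝ) : Matrix (Fin n) (Fin n) ℝ :=
  Pperp h * ehess F h * Pperp h - (egrad F h ⬝ᵥ h) • Pperp h

/-- The unit sphere `S^{n-1} ⊆ ℝⁿ`. -/
def usph (n : ℕ) : Set (Fin n → ℝ) := {h | enorm2 h = 1}

/-- The objective `L(h) = -(1/(4N)) ∑_i ‖C_{x_i} U h‖₄⁴`. -/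
def Lobj {n N : ℕ} (x : Fin N → Fin n → ℝ) (U : Matrix (Fin n) (Fin n) ℝ)
    (h : Fin n → ℝ) : ℝ :=
  -(1 / (4 * (N : ℝ))) * ∑ i, ∑ j, ((Matrix.circulant (x i) * U).mulVec h j) ^ 4

/-- Manifold gradient descent iterates. -/
def mgdIter {n : ℕ} (F : (Fin n → ℝ) → ℝ) (γ : ℝ) (h0 : Fin n → ℝ) : ℕ → Fin n → ℝ
  | 0 => h0
  | t + 1 =>
    let w := mgdIter F γ h0 t - γ • rgrad F (mgdIter F γ h0 t)
    (enorm2 w)⁻¹ • w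

/-- `h₀` is a stationary point with `r` nonzero entries: each nonzero entry equals `±1/√r`. -/
def IsStatPoint {n : ℕ} (h₀ : Fin n → ℝ) (r : ℕ) : Prop :=
  (∀ j, h₀ j = 0 ∨ h₀ j = 1 / Real.sqrt r ∨ h₀ j = -(1 / Real.sqrt r)) ∧
  (Finset.univ.filter fun j => h₀ j ≠ 0).card = r

/-- `h` is in the `(ρ,r)`-neighborhood of `h₀`. -/
def nbhd {n : ℕ} (ρ : ℝ) (r : ℕ) (h₀ h : Fin n → ℝ) : Prop :=
  ∀ j, |h j ^ 2 - h₀ j ^ 2| ≤ ρ / r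

def H1'' (n : ℕ) (ρ : ℝ) : Set (Fin n → ℝ) :=
  {h | enorm2 h = 1 ∧ ∃ h₀, IsStatPoint h₀ 1 ∧ nbhd ρ 1 h₀ h}

def H2'' (n : ℕ) (ρ : ℝ) : Set (Fin n → ℝ) :=
  {h | enorm2 h = 1 ∧ ∃ r h₀, 1 < r ∧ IsStatPoint h₀ r ∧ nbhd ρ r h₀ h}

def H3'' (n : ℕ) (ρ : ℝ) : Set (Fin n → ℝ) := usph n \ (H1'' n ρ ∪ H2'' n ρ)

/-- Symmetric positive semidefinite square root (junk value `0` off the PSD cone). -/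
def matSqrt {n : ℕ} (Q : Matrix (Fin n) (Fin n) ℝ) : Matrix (Fin n) (Fin n) ℝ :=
  letI := Classical.dec Q.PosSemidef
  if hQ : Q.PosSemidef then
    (hQ.1.eigenvectorUnitary : Matrix (Fin n) (Fin n) ℝ) *
      Matrix.diagonal (Real.sqrt ∘ hQ.1.eigenvalues) *
      (star hQ.1.eigenvectorUnitary : Matrix (Fin n) (Fin n) ℝ)
  else 0

/-- Inverse of the symmetric positive definite square root. -/
def matInvSqrt {n : ℕ} (Q : Matrix (Fin n) (Fin n) ℝ) : Matrix (Fin n) (Fin n) ℝ :=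
  (matSqrt Q)⁻¹

/-- The rotation `(C_fᵀ C_f)^{1/2} C_f⁻¹`. -/
def rotMat {n : ℕ} (f : Fin n → ℝ) : Matrix (Fin n) (Fin n) ℝ :=
  matSqrt ((Matrix.circulant f)ᵀ * Matrix.circulant f) * (Matrix.circulant f)⁻¹

def H1set {n : ℕ} (f : Fin n → ℝ) (ρ : ℝ) : Set (Fin n → ℝ) :=
  (fun h => (rotMat f).mulVec h) '' H1'' n ρ

def H2set {n : ℕ} (f : Fin n → ℝ) (ρ : ℝ) : Set (Fin n → ℝ) :=
  (fun h => (rotMat f).mulVec h) '' H2'' n ρ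

def H3set {n : ℕ} (f : Fin n → ℝ) (ρ : ℝ) : Set (Fin n → ℝ) :=
  (fun h => (rotMat f).mulVec h) '' H3'' n ρ

/-- The `n`-point DFT of a real vector. -/
def dftv {n : ℕ} (f : Fin n → ℝ) : Fin n → ℂ :=
  fun j => ∑ k, (f k : ℂ) *
    Complex.exp (-2 * Real.pi * Complex.I * (j : ℕ) * (k : ℕ) / n)

/-- The inverse `n`-point DFT. -/
def idftv {n : ℕ} (v : Fin n → ℂ) : Fin n → ℂ :=
  fun k => (n : ℂ)⁻¹ * ∑ j, v j *
    Complex.exp (2 * Real.pi * Complex.I * (j : ℕ) * (k : ℕ) / n)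

/-- The condition number `κ = max_j |𝓕f_j| / min_k |𝓕f_k|`. -/
def condNum {n : ℕ} (f : Fin n → ℝ) : ℝ :=
  (⨆ j, ‖dftv f j‖) / (⨅ j, ‖dftv f j‖)

/-- The Bernoulli–Rademacher distribution on ℝ with parameter θ. -/
def bernRad (θ : ℝ) : Measure ℝ :=
  ENNReal.ofReal (θ / 2) • Measure.dirac 1 + ENNReal.ofReal (θ / 2) • Measure.dirac (-1) +
    ENNReal.ofReal (1 - θ) • Measure.dirac 0

/-- The matrix `(1/(θnN)) ∑ᵢ C_{yᵢ}ᵀ C_{yᵢ}`. -/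
def Qmat {n N : ℕ} (θ : ℝ) (y : Fin N → Fin n → ℝ) : Matrix (Fin n) (Fin n) ℝ :=
  (1 / (θ * n * N)) • ∑ i, (Matrix.circulant (y i))ᵀ * Matrix.circulant (y i)

/-- The preconditioner `R = ((1/(θnN)) ∑ᵢ C_{yᵢ}ᵀ C_{yᵢ})^{-1/2}`. -/
def Rmat {n N : ℕ} (θ : ℝ) (y : Fin N → Fin n → ℝ) : Matrix (Fin n) (Fin n) ℝ :=
  matInvSqrt (Qmat θ y)


/-- The squared norm of the expected Riemannian gradient direction `‖h‖₄⁴ h - h^{⊙3}`, and the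
characterization of its zeros. -/
theorem stmt16 {n : ℕ} (h : Fin n → ℝ) (hh : h ∈ usph n) :
    (∑ j, ((∑ k, h k ^ 4) * h j - h j ^ 3) ^ 2 = ∑ j, h j ^ 6 - (∑ j, h j ^ 4) ^ 2) ∧
    (∑ j, ((∑ k, h k ^ 4) * h j - h j ^ 3) ^ 2 =
      ∑ p ∈ Finset.univ.filter (fun p : Fin n × Fin n => p.1 < p.2),
        h p.1 ^ 2 * h p.2 ^ 2 * (h p.1 ^ 2 - h p.2 ^ 2) ^ 2) ∧
    ((∀ j, (∑ k, h k ^ 4) * h j - h j ^ 3 = 0) ↔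
      ∃ r : ℕ, 1 ≤ r ∧ r ≤ n ∧ IsStatPoint h r) := by
  have hsum : ∑ j, h j ^ 2 = 1 := by
    have h1 : Real.sqrt (∑ j, h j ^ 2) = 1 := hh
    exact Real.sqrt_eq_one.mp h1
  set s := ∑ k, h k ^ 4 with hs
  have part1 : ∑ j, (s * h j - h j ^ 3) ^ 2 = (∑ j, h j ^ 6) - s ^ 2 := by
    calc ∑ j, (s * h j - h j ^ 3) ^ 2
        = ∑ j, (s ^ 2 * h j ^ 2 - (2 * s) * h j ^ 4 + h j ^ 6) :=
          Finset.sum_congr rfl fun j _ => by ring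
      _ = s ^ 2 * ∑ j, h j ^ 2 - (2 * s) * ∑ j, h j ^ 4 + ∑ j, h j ^ 6 := by
          rw [Finset.sum_add_distrib, Finset.sum_sub_distrib, ← Finset.mul_sum, ← Finset.mul_sum]
      _ = (∑ j, h j ^ 6) - s ^ 2 := by rw [hsum, ← hs]; ring
  refine ⟨part1, ?_, ?_⟩
  · -- pair sum
    set g : Fin n × Fin n → ℝ := fun p => h p.1 ^ 2 * h p.2 ^ 2 * (h p.1 ^ 2 - h p.2 ^ 2) ^ 2
      with hg
    have hT : ∑ p : Fin n × Fin n, g p = 2 * (∑ j, h j ^ 6) - 2 * s ^ 2 := by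
      rw [Fintype.sum_prod_type]
      calc ∑ j, ∑ k, g (j, k)
          = ∑ j, ∑ k, (h j ^ 6 * h k ^ 2 - (2 * h j ^ 4) * h k ^ 4 + h j ^ 2 * h k ^ 6) :=
            Finset.sum_congr rfl fun j _ => Finset.sum_congr rfl fun k _ => by
              simp only [hg]; ring
        _ = ∑ j, (h j ^ 6 * (∑ k, h k ^ 2) - (2 * h j ^ 4) * s + h j ^ 2 * ∑ k, h k ^ 6) := by
            refine Finset.sum_congr rfl fun j _ => ?_
            rw [Finset.sum_add_distrib, Finset.sum_sub_distrib, ← Finset.mul_sum,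
              ← Finset.mul_sum, ← Finset.mul_sum, ← hs]
        _ = 2 * (∑ j, h j ^ 6) - 2 * s ^ 2 := by
            rw [Finset.sum_add_distrib, Finset.sum_sub_distrib, ← Finset.sum_mul,
              ← Finset.sum_mul, ← Finset.sum_mul, hsum,
              show (∑ j, 2 * h j ^ 4) = 2 * s by rw [← Finset.mul_sum, ← hs]]
            ring
    have h1 : ∑ p : Fin n × Fin n, g p =
        ∑ p ∈ Finset.univ.filter (fun p : Fin n × Fin n => p.1 < p.2), g p +
        ∑ p ∈ Finset.univ.filter (fun p : Fin n × Fin n => ¬ p.1 < p.2), g p :=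
      (Finset.sum_filter_add_sum_filter_not _ _ _).symm
    have h2 : ∑ p ∈ Finset.univ.filter (fun p : Fin n × Fin n => ¬ p.1 < p.2), g p =
        ∑ p ∈ Finset.univ.filter (fun p : Fin n × Fin n => p.2 < p.1), g p := by
      refine (Finset.sum_subset ?_ ?_).symm
      · intro p hp
        simp only [Finset.mem_filter, Finset.mem_univ, true_and] at hp ⊢
        exact not_lt.mpr hp.le
      · intro p hp hnp
        simp only [Finset.mem_filter, Finset.mem_univ, true_and, not_lt] at hp hnp
        have : p.1 = p.2 := le_antisymm hnp hp
        simp [hg, this]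
    have h3 : ∑ p ∈ Finset.univ.filter (fun p : Fin n × Fin n => p.2 < p.1), g p =
        ∑ p ∈ Finset.univ.filter (fun p : Fin n × Fin n => p.1 < p.2), g p := by
      refine Finset.sum_equiv (Equiv.prodComm (Fin n) (Fin n)) ?_ ?_
      · intro p; simp [Equiv.prodComm]
      · intro p hp; simp only [hg, Equiv.prodComm_apply, Prod.fst_swap, Prod.snd_swap]; ring
    rw [part1]
    have hdbl : ∑ p : Fin n × Fin n, g p =
        2 * ∑ p ∈ Finset.univ.filter (fun p : Fin n × Fin n => p.1 < p.2), g p := by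
      rw [h1, h2, h3]; ring
    rw [hdbl] at hT
    simp only [hg] at hT ⊢
    linarith
  · constructor
    · intro hz
      set F := Finset.univ.filter (fun j => h j ≠ 0) with hF
      have hkey : ∀ k, h k ≠ 0 → h k ^ 2 = s := by
        intro k hk
        have h3 : h k * h k ^ 2 = h k * s := by linear_combination - hz k
        exact mul_left_cancel₀ hk h3
      have hs1 : (F.card : ℝ) * s = 1 := by
        calc (F.card : ℝ) * s = ∑ k ∈ F, s := by rw [Finset.sum_const, nsmul_eq_mul]
          _ = ∑ k ∈ F, h k ^ 2 :=
              Finset.sum_congr rfl fun k hk => (hkey k ((Finset.mem_filter.mp hk).2)).symm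
          _ = ∑ k, h k ^ 2 := Finset.sum_filter_of_ne fun k _ hk2 h0 => hk2 (by rw [h0]; ring)
          _ = 1 := hsum
      have hcne : (F.card : ℝ) ≠ 0 := by
        intro h0; rw [h0, zero_mul] at hs1; exact zero_ne_one hs1
      have hcpos : (0:ℝ) < (F.card : ℝ) := by
        rcases (Nat.cast_pos (α := ℝ)).mpr (Nat.pos_of_ne_zero (by exact_mod_cast hcne)) with h'
        exact h'
      refine ⟨F.card, ?_, ?_, ?_, rfl⟩
      · exact Nat.one_le_iff_ne_zero.mpr (by exact_mod_cast hcne)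
      · exact (Finset.card_filter_le _ _).trans (by simp)
      · intro j
        rcases eq_or_ne (h j) 0 with h0 | h0
        · exact Or.inl h0
        · right
          have hjs : h j ^ 2 = 1 / (F.card : ℝ) := by
            rw [hkey j h0]; field_simp; linarith [hs1]
          have hsp : (0:ℝ) < 1 / Real.sqrt (F.card : ℝ) := by positivity
          have habs : |h j| = 1 / Real.sqrt (F.card : ℝ) := by
            rw [← Real.sqrt_sq_eq_abs, hjs, one_div, one_div, Real.sqrt_inv]
          exact (abs_eq hsp.le).mp habs
    · rintro ⟨r, hr1, _, hvals, hcard⟩ j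
      have hrpos : (0:ℝ) < r := by exact_mod_cast lt_of_lt_of_le zero_lt_one hr1
      have hsqr : (1 / Real.sqrt r) ^ 2 = 1 / r := by
        rw [div_pow, one_pow, Real.sq_sqrt hrpos.le]
      have hsq2 : ∀ j, h j ≠ 0 → h j ^ 2 = 1 / r := by
        intro j hj
        rcases hvals j with h0 | h1 | h2
        · exact absurd h0 hj
        · rw [h1, hsqr]
        · rw [h2, neg_sq, hsqr]
      have hs4 : s = 1 / r := by
        rw [hs]
        calc ∑ k, h k ^ 4 = ∑ k ∈ Finset.univ.filter (fun j => h j ≠ 0), h k ^ 4 :=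
              (Finset.sum_subset (Finset.subset_univ _) (fun k _ hk => by
                simp only [Finset.mem_filter, Finset.mem_univ, true_and, not_not] at hk
                simp [hk])).symm
          _ = ∑ k ∈ Finset.univ.filter (fun j => h j ≠ 0), (1 / (r:ℝ)) ^ 2 := by
              refine Finset.sum_congr rfl fun k hk => ?_
              have hk' : h k ≠ 0 := (Finset.mem_filter.mp hk).2
              rw [show h k ^ 4 = (h k ^ 2) ^ 2 by ring, hsq2 k hk']
          _ = (r : ℝ) * (1 / (r:ℝ)) ^ 2 := by rw [Finset.sum_const, hcard, nsmul_eq_mul]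
          _ = 1 / r := by field_simp
      rcases eq_or_ne (h j) 0 with h0 | h0
      · rw [h0]; ring
      · have hj2 := hsq2 j h0
        linear_combination h j * hs4 - h j * hj2
end
end

section
/- Let 0 < θ < 1/3 and 0 < ρ < 10⁻³, let h₀ ∈ Sⁿ⁻¹ have exactly r nonzero entries each equal to ±1/√r, and let h ∈ Sⁿ⁻¹ be in the (ρ,r)-neighborhood of h₀, with h₀'s signs aligned to h (h_{(j)}h₀_{(j)} ≥ 0 for all j). With M(h) = nθ(1−3θ)[‖h‖₄⁴·I + 2‖h‖₄⁴·hhᵀ − 3·diag(h^⊙2)], the following hold: (i) ‖h − h₀‖ ≤ √(2ρ); (ii) |‖h‖₄⁴ − 1/r| ≤ 3ρ/r; (iii) ‖M(h) − M(h₀)‖ ≤ (nθ(1−3θ)/r)(12ρ + 4√(2ρ)) in spectral norm; (iv) |min over unit z ⊥ h of zᵀM(h)z − min over unit z ⊥ h₀ of zᵀM(h₀)z| ≤ 24√ρ · nθ(1−3θ)/r. -/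
open Matrix MeasureTheory ProbabilityTheory Finset Filter

noncomputable section

/-- `g(h) = nθ(1-3θ)(‖h‖₄⁴ h - h^{⊙3})`, the expected Riemannian gradient. -/
def gvec {n : ℕ} (θ : ℝ) (h : Fin n → ℝ) : Fin n → ℝ :=
  ((n : ℝ) * θ * (1 - 3 * θ)) • ((∑ j, h j ^ 4) • h - fun j => h j ^ 3)

/-- `M(h) = nθ(1-3θ)[‖h‖₄⁴ I + 2‖h‖₄⁴ h hᵀ - 3 diag(h^{⊙2})]`, the expected Riemannian Hessian. -/
def Mmat {n : ℕ} (θ : ℝ) (h : Fin n → ℝ) : Matrix (Fin n) (Fin n) ℝ :=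
  ((n : ℝ) * θ * (1 - 3 * θ)) •
    ((∑ j, h j ^ 4) • (1 : Matrix (Fin n) (Fin n) ℝ) +
      (2 * ∑ j, h j ^ 4) • Matrix.vecMulVec h h -
      (3 : ℝ) • Matrix.diagonal (fun j => h j ^ 2))

/-- `min { zᵀ A z : ‖z‖ = 1, z ⊥ h }`. -/
def minQuad {n : ℕ} (A : Matrix (Fin n) (Fin n) ℝ) (h : Fin n → ℝ) : ℝ :=
  sInf {c | ∃ z : Fin n → ℝ, enorm2 z = 1 ∧ z ⬝ᵥ h = 0 ∧ c = z ⬝ᵥ A.mulVec z}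


namespace Aux18
variable {n : ℕ}

lemma enorm2_nonneg (v : Fin n → ℝ) : 0 ≤ enorm2 v := Real.sqrt_nonneg _

lemma enorm2_sq (v : Fin n → ℝ) : enorm2 v ^ 2 = ∑ j, v j ^ 2 :=
  Real.sq_sqrt (Finset.sum_nonneg fun _ _ => sq_nonneg _)

lemma sum_sq_one_of_enorm2 {z : Fin n → ℝ} (h : enorm2 z = 1) : ∑ j, z j ^ 2 = 1 := by
  rw [← enorm2_sq, h, one_pow]

lemma enorm2_eq_norm (v : Fin n → ℝ) :
    enorm2 v = ‖((WithLp.equiv 2 (Fin n → ℝ)).symm v : EuclideanSpace ℝ (Fin n))‖ := by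
  rw [EuclideanSpace.norm_eq, enorm2]
  congr 1
  refine Finset.sum_congr rfl fun j _ => ?_
  rw [Real.norm_eq_abs, sq_abs]; rfl

lemma enorm2_le {v : Fin n → ℝ} {m : ℝ} (hm : 0 ≤ m) (h : ∑ j, v j ^ 2 ≤ m ^ 2) :
    enorm2 v ≤ m := by
  rw [enorm2]
  calc Real.sqrt (∑ j, v j ^ 2) ≤ Real.sqrt (m ^ 2) := Real.sqrt_le_sqrt h
  _ = m := Real.sqrt_sq hm

lemma enorm2_smul (t : ℝ) (v : Fin n → ℝ) : enorm2 (t • v) = |t| * enorm2 v := by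
  rw [enorm2, enorm2]
  rw [show ∑ j, (t • v) j ^ 2 = t ^ 2 * ∑ j, v j ^ 2 by
    rw [Finset.mul_sum]; exact Finset.sum_congr rfl fun j _ => by
      simp only [Pi.smul_apply, smul_eq_mul]; ring]
  rw [Real.sqrt_mul (sq_nonneg t), Real.sqrt_sq_eq_abs]

lemma spec_le {A : Matrix (Fin n) (Fin n) ℝ} {m : ℝ} (hm : 0 ≤ m)
    (H : ∀ v : Fin n → ℝ, enorm2 (A.mulVec v) ≤ m * enorm2 v) : spec A ≤ m := by
  refine ContinuousLinearMap.opNorm_le_bound _ hm fun x => ?_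
  have hx : x = (WithLp.equiv 2 (Fin n → ℝ)).symm ((WithLp.equiv 2 (Fin n → ℝ)) x) := rfl
  rw [hx, WithLp.equiv_symm_apply, Matrix.toEuclideanCLM_toLp, ← WithLp.equiv_symm_apply,
    ← enorm2_eq_norm, ← enorm2_eq_norm]
  exact H _

lemma spec_add_le (A B : Matrix (Fin n) (Fin n) ℝ) : spec (A + B) ≤ spec A + spec B := by
  rw [spec, map_add]; exact norm_add_le _ _

lemma cs_sq (u v : Fin n → ℝ) : (u ⬝ᵥ v) ^ 2 ≤ (∑ j, u j ^ 2) * ∑ j, v j ^ 2 :=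
  Finset.sum_mul_sq_le_sq_mul_sq _ _ _

lemma cs_abs (u v : Fin n → ℝ) : ∑ j, |u j| * |v j| ≤
    Real.sqrt (∑ j, u j ^ 2) * Real.sqrt (∑ j, v j ^ 2) := by
  have h := Finset.sum_mul_sq_le_sq_mul_sq Finset.univ (fun j => |u j|) (fun j => |v j|)
  simp only [sq_abs] at h
  have h1 : (0:ℝ) ≤ ∑ j, u j ^ 2 := Finset.sum_nonneg fun j _ => sq_nonneg _
  have := Real.sqrt_le_sqrt h
  rwa [Real.sqrt_sq (Finset.sum_nonneg fun j _ => mul_nonneg (abs_nonneg _) (abs_nonneg _)),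
    Real.sqrt_mul h1] at this

lemma abs_dot_le (w v : Fin n → ℝ) : |w ⬝ᵥ v| ≤ enorm2 w * enorm2 v := by
  have h := cs_sq w v
  have h1 : (0:ℝ) ≤ ∑ j, w j ^ 2 := Finset.sum_nonneg fun j _ => sq_nonneg _
  rw [← Real.sqrt_sq_eq_abs, enorm2, enorm2, ← Real.sqrt_mul h1]
  exact Real.sqrt_le_sqrt h

lemma smul_one_mulVec (t : ℝ) (v : Fin n → ℝ) :
    (t • (1 : Matrix (Fin n) (Fin n) ℝ)).mulVec v = t • v := by
  rw [Matrix.smul_mulVec, Matrix.one_mulVec]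

lemma vecMulVec_mulVec' (u w v : Fin n → ℝ) :
    (Matrix.vecMulVec u w).mulVec v = (w ⬝ᵥ v) • u := by
  funext j
  simp only [Matrix.mulVec, Matrix.vecMulVec_apply, dotProduct, Pi.smul_apply, smul_eq_mul]
  rw [Finset.sum_congr rfl (fun k _ => mul_assoc (u j) (w k) (v k)), ← Finset.mul_sum]
  ring

lemma diagonal_mulVec' (d v : Fin n → ℝ) :
    (Matrix.diagonal d).mulVec v = fun j => d j * v j := by
  funext j; rw [Matrix.mulVec_diagonal]

lemma quad_eq (θ : ℝ) (u z : Fin n → ℝ) (hz : ∑ j, z j ^ 2 = 1) (hzu : z ⬝ᵥ u = 0) :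
    z ⬝ᵥ (Mmat θ u).mulVec z
      = ((n : ℝ) * θ * (1 - 3 * θ)) * ((∑ j, u j ^ 4) - 3 * ∑ j, u j ^ 2 * z j ^ 2) := by
  have hzz : z ⬝ᵥ z = 1 := by
    rw [dotProduct]; rw [← hz]; exact Finset.sum_congr rfl fun j _ => (sq (z j)).symm
  have huz : u ⬝ᵥ z = 0 := by rw [dotProduct_comm]; exact hzu
  rw [Mmat, Matrix.smul_mulVec, Matrix.sub_mulVec, Matrix.add_mulVec,
    smul_one_mulVec, Matrix.smul_mulVec, Matrix.smul_mulVec,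
    vecMulVec_mulVec', diagonal_mulVec', huz]
  simp only [zero_smul, smul_zero, add_zero, dotProduct_smul, dotProduct_sub, smul_eq_mul, hzz]
  have e : z ⬝ᵥ (fun j => u j ^ 2 * z j) = ∑ j, u j ^ 2 * z j ^ 2 := by
    rw [dotProduct]; exact Finset.sum_congr rfl fun j _ => by ring
  rw [e]; ring

lemma exists_perp (hn : 2 ≤ n) (u : Fin n → ℝ) (hu : enorm2 u = 1) :
    ∃ z : Fin n → ℝ, enorm2 z = 1 ∧ z ⬝ᵥ u = 0 := by
  set U : EuclideanSpace ℝ (Fin n) := (WithLp.equiv 2 (Fin n → ℝ)).symm u with hU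
  have hUnorm : ‖U‖ = 1 := by rw [← enorm2_eq_norm, hu]
  have hUne : U ≠ 0 := by intro h; rw [h, norm_zero] at hUnorm; norm_num at hUnorm
  have hfr : Module.finrank ℝ (ℝ ∙ U) = 1 := finrank_span_singleton hUne
  have htot : Module.finrank ℝ (ℝ ∙ U) + Module.finrank ℝ (ℝ ∙ U)ᗮ
      = Module.finrank ℝ (EuclideanSpace ℝ (Fin n)) :=
    Submodule.finrank_add_finrank_orthogonal _
  have hdim : Module.finrank ℝ (EuclideanSpace ℝ (Fin n)) = n := by
    simp [finrank_euclideanSpace]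
  have hpos : 0 < Module.finrank ℝ (ℝ ∙ U)ᗮ := by omega
  have hne : (ℝ ∙ U)ᗮ ≠ ⊥ := by
    intro hbot
    rw [hbot, finrank_bot] at hpos
    exact lt_irrefl 0 hpos
  obtain ⟨x, hxmem, hxne⟩ := Submodule.exists_mem_ne_zero_of_ne_bot hne
  refine ⟨fun j => ‖x‖⁻¹ * x j, ?_, ?_⟩
  · have e1 : (fun j => ‖x‖⁻¹ * x j) = (WithLp.equiv 2 (Fin n → ℝ)) (‖x‖⁻¹ • x) := rfl
    rw [e1]
    rw [enorm2_eq_norm]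
    have e2 : (WithLp.equiv 2 (Fin n → ℝ)).symm ((WithLp.equiv 2 (Fin n → ℝ)) (‖x‖⁻¹ • x))
        = ‖x‖⁻¹ • x := rfl
    rw [e2, norm_smul, norm_inv, norm_norm, inv_mul_cancel₀ (norm_ne_zero_iff.mpr hxne)]
  · have hinner : (inner ℝ U x : ℝ) = 0 :=
      (Submodule.mem_orthogonal_singleton_iff_inner_right).mp hxmem
    have hsum : ∑ j, u j * x j = 0 := by
      rw [← hinner, PiLp.inner_apply]
      exact Finset.sum_congr rfl fun j _ => by
        simp [hU, WithLp.equiv_symm_apply, RCLike.inner_apply, mul_comm]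
    rw [dotProduct]
    calc ∑ j, (‖x‖⁻¹ * x j) * u j = ‖x‖⁻¹ * ∑ j, u j * x j := by
          rw [Finset.mul_sum]; exact Finset.sum_congr rfl fun j _ => by ring
    _ = 0 := by rw [hsum, mul_zero]

lemma quart_diff {u v : Fin n → ℝ} {δ : ℝ}
    (hd : ∀ j, |u j ^ 2 - v j ^ 2| ≤ δ) (hu : ∑ j, u j ^ 2 = 1) (hv : ∑ j, v j ^ 2 = 1) :
    |(∑ j, u j ^ 4) - ∑ j, v j ^ 4| ≤ 2 * δ := by
  have h1 : (∑ j, u j ^ 4) - ∑ j, v j ^ 4 = ∑ j, (u j ^ 4 - v j ^ 4) := by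
    rw [Finset.sum_sub_distrib]
  rw [h1]
  calc |∑ j, (u j ^ 4 - v j ^ 4)| ≤ ∑ j, |u j ^ 4 - v j ^ 4| := Finset.abs_sum_le_sum_abs _ _
  _ ≤ ∑ j, δ * (u j ^ 2 + v j ^ 2) := by
      refine Finset.sum_le_sum fun j _ => ?_
      have e : u j ^ 4 - v j ^ 4 = (u j ^ 2 - v j ^ 2) * (u j ^ 2 + v j ^ 2) := by ring
      rw [e, abs_mul, abs_of_nonneg (by positivity : (0:ℝ) ≤ u j ^ 2 + v j ^ 2)]
      exact mul_le_mul_of_nonneg_right (hd j) (by positivity)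
  _ = 2 * δ := by rw [← Finset.mul_sum, Finset.sum_add_distrib, hu, hv]; ring

lemma sq_sub_le_abs {a b : ℝ} (hab : 0 ≤ a * b) : (a - b) ^ 2 ≤ |a ^ 2 - b ^ 2| := by
  have h1 : |a - b| ≤ |a + b| := by
    rw [← Real.sqrt_sq_eq_abs, ← Real.sqrt_sq_eq_abs (a + b)]
    exact Real.sqrt_le_sqrt (by nlinarith)
  calc (a - b) ^ 2 = |a - b| * |a - b| := by rw [← sq_abs]; ring
  _ ≤ |a + b| * |a - b| := mul_le_mul_of_nonneg_right h1 (abs_nonneg _)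
  _ = |a ^ 2 - b ^ 2| := by rw [← abs_mul]; congr 1; ring

lemma num_iv {ρ p t3 : ℝ} (hρ1 : 0 < ρ) (hρ2 : ρ < 1/1000) (hp0 : 0 ≤ p) (hp2 : p^2 = ρ)
    (hp032 : p ≤ 0.032) (hinv : (1-2*ρ)⁻¹ ≤ 1.003) (ht0 : 0 ≤ t3) (htabs : t3 ≤ 1.415*p)
    (ht2 : t3^2 ≤ 2*ρ) :
    5 * ρ + 3 * ((1 - 2*ρ)⁻¹ * ((1 + ρ) * (2 * t3 + 2 * t3 ^ 2))) ≤ 24 * p := by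
  have ht2p : t3 ^ 2 ≤ 2 * p ^ 2 := by rw [hp2]; exact ht2
  have hpp : p ^ 2 ≤ 0.032 * p := by nlinarith
  have h2a : 2 * t3 + 2 * t3 ^ 2 ≤ 2.958 * p := by nlinarith
  have h2a0 : 0 ≤ 2 * t3 + 2 * t3 ^ 2 := by positivity
  have hρ' : (1 + ρ) ≤ 1.002 := by nlinarith
  have hY : (1 + ρ) * (2 * t3 + 2 * t3 ^ 2) ≤ 1.002 * (2.958 * p) :=
    mul_le_mul hρ' h2a h2a0 (by norm_num)
  have hY0 : 0 ≤ (1 + ρ) * (2 * t3 + 2 * t3 ^ 2) := by positivity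
  have hX : (1 - 2*ρ)⁻¹ * ((1 + ρ) * (2 * t3 + 2 * t3 ^ 2))
      ≤ 1.003 * (1.002 * (2.958 * p)) := by
    calc (1 - 2*ρ)⁻¹ * ((1 + ρ) * (2 * t3 + 2 * t3 ^ 2))
        ≤ 1.003 * ((1 + ρ) * (2 * t3 + 2 * t3 ^ 2)) :=
          mul_le_mul_of_nonneg_right hinv hY0
    _ ≤ 1.003 * (1.002 * (2.958 * p)) := by linarith
  nlinarith

lemma num_pos1 {ρ t : ℝ} (hρ2 : ρ < 1/1000) (ht2 : t^2 ≤ 2*ρ) : 0 < 1 - t^2 := by nlinarith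

lemma num_inv1 {ρ t : ℝ} (hρ2 : ρ < 1/1000) (ht2 : t^2 ≤ 2*ρ) (hρ0 : 0 < ρ) :
    (1 - t^2)⁻¹ ≤ (1 - 2*ρ)⁻¹ := by
  have h1 : 0 < 1 - 2*ρ := by nlinarith
  have h2 : 1 - 2*ρ ≤ 1 - t^2 := by nlinarith
  exact inv_anti₀ h1 h2

lemma num_inv2 {ρ : ℝ} (hρ1 : 0 < ρ) (hρ2 : ρ < 1/1000) : (1 - 2*ρ)⁻¹ ≤ 1.003 := by
  rw [inv_eq_one_div, div_le_iff₀ (by nlinarith)]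
  nlinarith

lemma num_sq1 {ρ p t : ℝ} (ht2 : t^2 ≤ 2*ρ) (hp2 : p^2 = ρ) : t^2 ≤ (1.415*p)^2 := by nlinarith

lemma num_iii {ρ ε : ℝ} (hρ1 : 0 < ρ) (hρ2 : ρ < 1/1000) (hε0 : 0 ≤ ε) (hε2 : ε^2 = 2*ρ) :
    9*ρ + 4*ε + 8*ρ*ε ≤ 12*ρ + 4*ε := by
  nlinarith [sq_nonneg (ε - 3/8), mul_nonneg hρ1.le hε0]

lemma spec_smul_one_le (t : ℝ) : spec (t • (1 : Matrix (Fin n) (Fin n) ℝ)) ≤ |t| :=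
  spec_le (abs_nonneg t) fun v =>
    le_of_eq (by rw [Matrix.smul_mulVec, Matrix.one_mulVec, enorm2_smul])

lemma spec_smul_vecMulVec_le (t : ℝ) (u w : Fin n → ℝ) :
    spec (t • Matrix.vecMulVec u w) ≤ |t| * (enorm2 u * enorm2 w) := by
  apply spec_le (mul_nonneg (abs_nonneg t) (mul_nonneg (enorm2_nonneg u) (enorm2_nonneg w)))
  intro v
  rw [Matrix.smul_mulVec, vecMulVec_mulVec', enorm2_smul, enorm2_smul]
  calc |t| * (|w ⬝ᵥ v| * enorm2 u)
      ≤ |t| * ((enorm2 w * enorm2 v) * enorm2 u) :=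
        mul_le_mul_of_nonneg_left
          (mul_le_mul_of_nonneg_right (abs_dot_le w v) (enorm2_nonneg u)) (abs_nonneg t)
  _ = |t| * (enorm2 u * enorm2 w) * enorm2 v := by ring

lemma spec_smul_diagonal_le (t : ℝ) (d : Fin n → ℝ) {m : ℝ} (hm : 0 ≤ m)
    (hd : ∀ j, |d j| ≤ m) : spec (t • Matrix.diagonal d) ≤ |t| * m := by
  apply spec_le (mul_nonneg (abs_nonneg t) hm)
  intro v
  rw [Matrix.smul_mulVec, enorm2_smul, mul_assoc]
  apply mul_le_mul_of_nonneg_left ?_ (abs_nonneg t)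
  apply enorm2_le (mul_nonneg hm (enorm2_nonneg v))
  have e : ∀ j, ((Matrix.diagonal d).mulVec v) j = d j * v j := fun j =>
    Matrix.mulVec_diagonal d v j
  rw [Finset.sum_congr rfl fun j _ => by rw [e j], mul_pow, enorm2_sq, Finset.mul_sum]
  refine Finset.sum_le_sum fun j _ => ?_
  rw [show (d j * v j) ^ 2 = d j ^ 2 * v j ^ 2 from by ring]
  apply mul_le_mul_of_nonneg_right ?_ (sq_nonneg _)
  rw [← sq_abs]
  exact pow_le_pow_left₀ (abs_nonneg _) (hd j) 2

lemma Mmat_diff (θ : ℝ) (u v : Fin n → ℝ) :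
    Mmat θ u - Mmat θ v =
      (((n : ℝ) * θ * (1 - 3 * θ)) * ((∑ j, u j ^ 4) - ∑ j, v j ^ 4)) •
        (1 : Matrix (Fin n) (Fin n) ℝ)
      + (((n : ℝ) * θ * (1 - 3 * θ)) * (2 * ∑ j, u j ^ 4)) • Matrix.vecMulVec (u - v) u
      + (((n : ℝ) * θ * (1 - 3 * θ)) * (2 * ∑ j, u j ^ 4)) • Matrix.vecMulVec v (u - v)
      + (((n : ℝ) * θ * (1 - 3 * θ)) * (2 * ((∑ j, u j ^ 4) - ∑ j, v j ^ 4))) •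
        Matrix.vecMulVec v v
      + (((n : ℝ) * θ * (1 - 3 * θ)) * (-3)) • Matrix.diagonal (fun j => u j ^ 2 - v j ^ 2) := by
  ext i j
  simp only [Mmat, Matrix.sub_apply, Matrix.add_apply, Matrix.smul_apply, smul_eq_mul,
    Matrix.vecMulVec_apply, Matrix.one_apply, Matrix.diagonal_apply, Pi.sub_apply]
  by_cases h : i = j <;> simp [h] <;> ring

set_option maxHeartbeats 1000000 in
lemma key {θ ρ : ℝ} {r : ℕ} (hn : 2 ≤ n) (hc : 0 ≤ (n : ℝ) * θ * (1 - 3 * θ))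
    (hρ1 : 0 < ρ) (hρ2 : ρ < 1 / 1000) (hr : 1 ≤ r) (u v : Fin n → ℝ)
    (hu : ∑ j, u j ^ 2 = 1) (hv : ∑ j, v j ^ 2 = 1)
    (hd : ∀ j, |u j ^ 2 - v j ^ 2| ≤ ρ / r)
    (hsub : ∑ j, (u j - v j) ^ 2 ≤ 2 * ρ)
    (hmv : ∀ j, v j ^ 2 ≤ (1 + ρ) / r) :
    minQuad (Mmat θ v) v ≤ minQuad (Mmat θ u) u
      + 24 * Real.sqrt ρ * ((n : ℝ) * θ * (1 - 3 * θ) / r) := by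
  have hr0 : (0:ℝ) < r := by exact_mod_cast hr
  set c := (n : ℝ) * θ * (1 - 3 * θ) with hcdef
  set m := (1 + ρ) / r with hmdef
  have hm0 : 0 ≤ m := by positivity
  set Su := {x | ∃ z : Fin n → ℝ, enorm2 z = 1 ∧ z ⬝ᵥ u = 0 ∧
    x = z ⬝ᵥ (Mmat θ u).mulVec z} with hSudef
  set Sv := {x | ∃ z : Fin n → ℝ, enorm2 z = 1 ∧ z ⬝ᵥ v = 0 ∧
    x = z ⬝ᵥ (Mmat θ v).mulVec z} with hSvdef
  have hqu : minQuad (Mmat θ u) u = sInf Su := rfl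
  have hqv : minQuad (Mmat θ v) v = sInf Sv := rfl
  have hSu_ne : Su.Nonempty := by
    obtain ⟨z, hz1, hz2⟩ := exists_perp hn u (by rw [enorm2, hu, Real.sqrt_one])
    exact ⟨z ⬝ᵥ (Mmat θ u).mulVec z, ⟨z, hz1, hz2, rfl⟩⟩
  have hqle : ∀ z : Fin n → ℝ, (∑ j, z j ^ 2 = 1) → ∑ j, v j ^ 2 * z j ^ 2 ≤ m := by
    intro z hz
    calc ∑ j, v j ^ 2 * z j ^ 2 ≤ ∑ j, m * z j ^ 2 :=
      Finset.sum_le_sum fun j _ => mul_le_mul_of_nonneg_right (hmv j) (sq_nonneg _)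
    _ = m := by rw [← Finset.mul_sum, hz, mul_one]
  have hSv_bdd : BddBelow Sv := by
    refine ⟨c * ((∑ j, v j ^ 4) - 3 * m), ?_⟩
    rintro x ⟨z, hz1, hz2, rfl⟩
    rw [quad_eq θ v z (sum_sq_one_of_enorm2 hz1) hz2]
    have hq := hqle z (sum_sq_one_of_enorm2 hz1)
    exact mul_le_mul_of_nonneg_left (by linarith) hc
  -- numerics
  set p := Real.sqrt ρ with hpdef
  have hp0 : 0 ≤ p := Real.sqrt_nonneg _
  have hp2 : p ^ 2 = ρ := Real.sq_sqrt hρ1.le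
  have hp032 : p ≤ 0.032 := by
    rw [hpdef, show (0.032:ℝ) = Real.sqrt (0.032 ^ 2) from (Real.sqrt_sq (by norm_num)).symm]
    exact Real.sqrt_le_sqrt (by nlinarith)
  have hinv : (1 - 2*ρ)⁻¹ ≤ 1.003 := num_inv2 hρ1 hρ2
  have hinv0 : (0:ℝ) < (1 - 2*ρ)⁻¹ := inv_pos.mpr (by norm_num at hρ2 ⊢; linarith)
  have main : ∀ x ∈ Su, sInf Sv ≤ x + 24 * p * (c / r) := by
    rintro x ⟨z, hz1, hzu, rfl⟩
    have hz : ∑ j, z j ^ 2 = 1 := sum_sq_one_of_enorm2 hz1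
    set t := z ⬝ᵥ v with htdef
    have htsum : ∑ j, z j * v j = t := rfl
    have ht2 : t ^ 2 ≤ 2 * ρ := by
      have h1 : t = z ⬝ᵥ (v - u) := by rw [dotProduct_sub, hzu, sub_zero]
      have h2 : (z ⬝ᵥ (v - u)) ^ 2 ≤ (∑ j, z j ^ 2) * ∑ j, (v - u) j ^ 2 :=
        Finset.sum_mul_sq_le_sq_mul_sq _ _ _
      have h3 : ∑ j, (v - u) j ^ 2 = ∑ j, (u j - v j) ^ 2 :=
        Finset.sum_congr rfl fun j _ => by simp [Pi.sub_apply]; ring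
      rw [h1]
      calc (z ⬝ᵥ (v - u)) ^ 2 ≤ (∑ j, z j ^ 2) * ∑ j, (v - u) j ^ 2 := h2
      _ = ∑ j, (u j - v j) ^ 2 := by rw [hz, h3, one_mul]
      _ ≤ 2 * ρ := hsub
    have htabs : |t| ≤ 1.415 * p := by
      have h1 : |t| = Real.sqrt (t ^ 2) := (Real.sqrt_sq_eq_abs t).symm
      have h2 : (1.415 : ℝ) * p = Real.sqrt ((1.415 * p) ^ 2) :=
        (Real.sqrt_sq (by positivity)).symm
      rw [h1, h2]
      exact Real.sqrt_le_sqrt (num_sq1 ht2 hp2)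
    have hρt : 0 < 1 - t ^ 2 := num_pos1 hρ2 ht2
    have h1t2ρ : (1 - t^2)⁻¹ ≤ (1 - 2*ρ)⁻¹ := num_inv1 hρ2 ht2 hρ1
    set w := fun j => z j - t * v j with hwdef
    have hw2 : ∑ j, w j ^ 2 = 1 - t ^ 2 := by
      have e : ∀ j : Fin n, w j ^ 2 = z j ^ 2 - 2 * t * (z j * v j) + t ^ 2 * v j ^ 2 :=
        fun j => by simp only [hwdef]; ring
      rw [Finset.sum_congr rfl fun j _ => e j, Finset.sum_add_distrib, Finset.sum_sub_distrib,
        ← Finset.mul_sum, ← Finset.mul_sum, hz, htsum, hv]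
      ring
    set s := Real.sqrt (1 - t ^ 2) with hsdef
    have hs0 : 0 < s := Real.sqrt_pos.mpr hρt
    have hs2 : s ^ 2 = 1 - t ^ 2 := Real.sq_sqrt hρt.le
    set z' := fun j => s⁻¹ * w j with hz'def
    have hz'sum : ∑ j, z' j ^ 2 = 1 := by
      have e : ∀ j : Fin n, z' j ^ 2 = s⁻¹ ^ 2 * w j ^ 2 := fun j => by
        simp only [hz'def]; ring
      rw [Finset.sum_congr rfl fun j _ => e j, ← Finset.mul_sum, hw2, inv_pow, hs2]
      field_simp
    have hz'v : z' ⬝ᵥ v = 0 := by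
      calc z' ⬝ᵥ v = ∑ j, s⁻¹ * (z j * v j - t * v j ^ 2) := by
            rw [dotProduct]; exact Finset.sum_congr rfl fun j _ => by
              simp only [hz'def, hwdef]; ring
      _ = s⁻¹ * ((∑ j, z j * v j) - t * ∑ j, v j ^ 2) := by
            rw [← Finset.mul_sum, Finset.sum_sub_distrib, ← Finset.mul_sum]
      _ = 0 := by rw [htsum, hv]; ring
    have hmemv : (z' ⬝ᵥ (Mmat θ v).mulVec z') ∈ Sv :=
      ⟨z', by rw [enorm2, hz'sum, Real.sqrt_one], hz'v, rfl⟩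
    have hlow := csInf_le hSv_bdd hmemv
    rw [quad_eq θ v z' hz'sum hz'v] at hlow
    rw [quad_eq θ u z hz hzu]
    -- the three quadratic quantities
    set q := ∑ j, u j ^ 2 * z j ^ 2 with hqdef
    set q0 := ∑ j, v j ^ 2 * z j ^ 2 with hq0def
    set q' := ∑ j, v j ^ 2 * z' j ^ 2 with hq'def
    set A3 := ∑ j, v j ^ 3 * z j with hA3def
    set B4 := ∑ j, v j ^ 4 with hB4def
    have hq00 : 0 ≤ q0 := Finset.sum_nonneg fun j _ => by positivity
    have hq0m : q0 ≤ m := hqle z hz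
    have hq0q : |q0 - q| ≤ ρ / r := by
      have e : q0 - q = ∑ j, (v j ^ 2 - u j ^ 2) * z j ^ 2 := by
        rw [← Finset.sum_sub_distrib]; exact Finset.sum_congr rfl fun j _ => by ring
      rw [e]
      calc |∑ j, (v j ^ 2 - u j ^ 2) * z j ^ 2|
          ≤ ∑ j, |(v j ^ 2 - u j ^ 2) * z j ^ 2| := Finset.abs_sum_le_sum_abs _ _
      _ ≤ ∑ j, (ρ / r) * z j ^ 2 := Finset.sum_le_sum fun j _ => by
            rw [abs_mul, abs_of_nonneg (sq_nonneg (z j))]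
            exact mul_le_mul_of_nonneg_right (by rw [abs_sub_comm]; exact hd j) (sq_nonneg _)
      _ = ρ / r := by rw [← Finset.mul_sum, hz, mul_one]
    have hcszv : ∑ j, |v j| * |z j| ≤ 1 := by
      have h := cs_abs v z
      rwa [hv, hz, Real.sqrt_one, mul_one] at h
    have hA3m : |A3| ≤ m := by
      calc |A3| ≤ ∑ j, |v j ^ 3 * z j| := Finset.abs_sum_le_sum_abs _ _
      _ ≤ ∑ j, m * (|v j| * |z j|) := Finset.sum_le_sum fun j _ => by
            have e : |v j ^ 3 * z j| = v j ^ 2 * (|v j| * |z j|) := by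
              rw [abs_mul, show v j ^ 3 = v j ^ 2 * v j from by ring, abs_mul,
                abs_of_nonneg (sq_nonneg (v j)), mul_assoc]
            rw [e]
            exact mul_le_mul_of_nonneg_right (hmv j) (by positivity)
      _ = m * ∑ j, |v j| * |z j| := by rw [Finset.mul_sum]
      _ ≤ m * 1 := mul_le_mul_of_nonneg_left hcszv hm0
      _ = m := mul_one m
    have hB40 : 0 ≤ B4 := Finset.sum_nonneg fun j _ => by positivity
    have hB4m : B4 ≤ m := by
      calc B4 = ∑ j, v j ^ 2 * v j ^ 2 := Finset.sum_congr rfl fun j _ => by ring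
      _ ≤ ∑ j, m * v j ^ 2 := Finset.sum_le_sum fun j _ =>
            mul_le_mul_of_nonneg_right (hmv j) (sq_nonneg _)
      _ = m := by rw [← Finset.mul_sum, hv, mul_one]
    have hq'e : q' * (1 - t ^ 2) = q0 - 2 * t * A3 + t ^ 2 * B4 := by
      have e2 : q' = s⁻¹ ^ 2 * ∑ j, v j ^ 2 * w j ^ 2 := by
        rw [hq'def, Finset.mul_sum]
        exact Finset.sum_congr rfl fun j _ => by simp only [hz'def]; ring
      have e3 : ∑ j, v j ^ 2 * w j ^ 2
          = q0 - 2 * t * A3 + t ^ 2 * B4 := by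
        have e : ∀ j : Fin n, v j ^ 2 * w j ^ 2
            = v j ^ 2 * z j ^ 2 - 2 * t * (v j ^ 3 * z j) + t ^ 2 * v j ^ 4 :=
          fun j => by simp only [hwdef]; ring
        rw [Finset.sum_congr rfl fun j _ => e j, Finset.sum_add_distrib,
          Finset.sum_sub_distrib, ← Finset.mul_sum, ← Finset.mul_sum]
      rw [e2, e3, inv_pow, hs2]
      field_simp
    have hq'q0 : |q' - q0| ≤ (1 - 2*ρ)⁻¹ * (m * (2 * |t| + 2 * t ^ 2)) := by
      have e : q' - q0 = (1 - t ^ 2)⁻¹ * (-(2 * t * A3) + t ^ 2 * B4 + t ^ 2 * q0) := by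
        have h1 : q' = (1 - t ^ 2)⁻¹ * (q0 - 2 * t * A3 + t ^ 2 * B4) := by
          field_simp
          linarith [hq'e]
        rw [h1]
        field_simp
        ring
      rw [e, abs_mul, abs_of_nonneg (le_of_lt (by positivity : (0:ℝ) < (1 - t^2)⁻¹))]
      have habs : |(-(2 * t * A3) + t ^ 2 * B4 + t ^ 2 * q0)| ≤ m * (2 * |t| + 2 * t ^ 2) := by
        calc |(-(2 * t * A3) + t ^ 2 * B4 + t ^ 2 * q0)|
            ≤ |(-(2 * t * A3)) + t ^ 2 * B4| + |t ^ 2 * q0| := abs_add_le _ _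
        _ ≤ |(-(2 * t * A3))| + |t ^ 2 * B4| + |t ^ 2 * q0| := by
              linarith [abs_add_le (-(2 * t * A3)) (t ^ 2 * B4)]
        _ ≤ 2 * |t| * m + t ^ 2 * m + t ^ 2 * m := by
              have e1 : |(-(2 * t * A3))| = 2 * |t| * |A3| := by
                rw [abs_neg, abs_mul, abs_mul]; norm_num
              have e2 : |t ^ 2 * B4| = t ^ 2 * B4 := abs_of_nonneg (by positivity)
              have e3 : |t ^ 2 * q0| = t ^ 2 * q0 := abs_of_nonneg (by positivity)
              have h1 : 2 * |t| * |A3| ≤ 2 * |t| * m :=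
                mul_le_mul_of_nonneg_left hA3m (by positivity)
              have h2 : t ^ 2 * B4 ≤ t ^ 2 * m := mul_le_mul_of_nonneg_left hB4m (sq_nonneg t)
              have h3 : t ^ 2 * q0 ≤ t ^ 2 * m := mul_le_mul_of_nonneg_left hq0m (sq_nonneg t)
              rw [e1, e2, e3]
              linarith
        _ = m * (2 * |t| + 2 * t ^ 2) := by ring
      exact mul_le_mul h1t2ρ habs (abs_nonneg _) (le_of_lt hinv0)
    -- final numeric assembly
    have haa : (∑ j, v j ^ 4) ≤ (∑ j, u j ^ 4) + 2 * (ρ / r) := by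
      have := quart_diff hd hu hv
      have := abs_le.mp this
      linarith
    have hGnum : 5 * ρ + 3 * ((1 - 2*ρ)⁻¹ * ((1 + ρ) * (2 * |t| + 2 * t ^ 2))) ≤ 24 * p := by
      have htsq : |t|^2 ≤ 2*ρ := by rw [sq_abs]; exact ht2
      have h := num_iv hρ1 hρ2 hp0 hp2 hp032 hinv (abs_nonneg t) htabs htsq
      rwa [sq_abs] at h
    have hmE : m * (2 * |t| + 2 * t ^ 2) = ((1 + ρ) * (2 * |t| + 2 * t ^ 2)) / r := by
      rw [hmdef]; ring
    have hscal : (∑ j, v j ^ 4) - 3 * q' ≤ (∑ j, u j ^ 4) - 3 * q + 24 * p / r := by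
      have habs1 := abs_le.mp hq0q
      have habs2 := abs_le.mp hq'q0
      have hdivr : (5 * ρ + 3 * ((1 - 2*ρ)⁻¹ * ((1 + ρ) * (2 * |t| + 2 * t ^ 2)))) / r
          ≤ 24 * p / r := by
        gcongr
      rw [hmE] at habs2
      have expand : (5 * ρ + 3 * ((1 - 2*ρ)⁻¹ * ((1 + ρ) * (2 * |t| + 2 * t ^ 2)))) / r
          = 5 * (ρ / r) + 3 * ((1 - 2*ρ)⁻¹ * (((1 + ρ) * (2 * |t| + 2 * t ^ 2)) / r)) := by
        ring
      rw [expand] at hdivr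
      linarith
    rw [← hcdef] at hlow ⊢
    have := mul_le_mul_of_nonneg_left hscal hc
    have hre : c * ((∑ j, u j ^ 4) - 3 * q + 24 * p / r)
        = c * ((∑ j, u j ^ 4) - 3 * q) + 24 * p * (c / r) := by ring
    linarith [hlow]
  rw [hqu, hqv]
  have hlb : ∀ x ∈ Su, sInf Sv - 24 * p * (c / r) ≤ x := fun x hx => by
    linarith [main x hx]
  have := le_csInf hSu_ne hlb
  linarith


end Aux18

/-- Perturbation bounds in a `(ρ,r)`-neighborhood of a stationary point. -/
theorem stmt18 {n : ℕ} (hn : 2 ≤ n) (θ ρ : ℝ) (hθ1 : 0 < θ) (hθ2 : θ < 1 / 3)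
    (hρ1 : 0 < ρ) (hρ2 : ρ < 1 / 1000)
    (r : ℕ) (hr : 1 ≤ r) (h₀ h : Fin n → ℝ) (hstat : IsStatPoint h₀ r)
    (hh : h ∈ usph n) (hnb : nbhd ρ r h₀ h) (halign : ∀ j, 0 ≤ h j * h₀ j) :
    enorm2 (h - h₀) ≤ Real.sqrt (2 * ρ) ∧
    |(∑ j, h j ^ 4) - 1 / (r : ℝ)| ≤ 3 * ρ / r ∧
    spec (Mmat θ h - Mmat θ h₀) ≤
      ((n : ℝ) * θ * (1 - 3 * θ) / r) * (12 * ρ + 4 * Real.sqrt (2 * ρ)) ∧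
    |minQuad (Mmat θ h) h - minQuad (Mmat θ h₀) h₀| ≤
      24 * Real.sqrt ρ * ((n : ℝ) * θ * (1 - 3 * θ) / r) := by
  obtain ⟨htri, hcard⟩ := hstat
  have hr0 : (0:ℝ) < r := by exact_mod_cast hr
  have hh1 : enorm2 h = 1 := hh
  have hsum2h : ∑ j, h j ^ 2 = 1 := Aux18.sum_sq_one_of_enorm2 hh1
  have hsq01 : ∀ j, h₀ j = 0 ∨ h₀ j ^ 2 = 1 / (r:ℝ) := by
    intro j
    rcases htri j with h1 | h1 | h1
    · exact Or.inl h1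
    · right; rw [h1, div_pow, one_pow, Real.sq_sqrt (Nat.cast_nonneg r)]
    · right; rw [h1, neg_sq, div_pow, one_pow, Real.sq_sqrt (Nat.cast_nonneg r)]
  have hfil : ∀ j ∈ Finset.univ.filter (fun j => h₀ j ≠ 0), h₀ j ^ 2 = 1 / (r:ℝ) := by
    intro j hj
    rcases hsq01 j with h1 | h1
    · exact absurd h1 (Finset.mem_filter.mp hj).2
    · exact h1
  have hoff : ∀ j ∈ Finset.univ.filter (fun j => ¬ h₀ j ≠ 0), h₀ j = 0 := fun j hj =>
    not_not.mp (Finset.mem_filter.mp hj).2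
  have hsum2₀ : ∑ j, h₀ j ^ 2 = 1 := by
    have e0 : ∑ j ∈ Finset.univ.filter (fun j => ¬ h₀ j ≠ 0), h₀ j ^ 2 = 0 :=
      Finset.sum_eq_zero fun j hj => by rw [hoff j hj]; norm_num
    rw [← Finset.sum_filter_add_sum_filter_not Finset.univ (fun j => h₀ j ≠ 0)
      (fun j => h₀ j ^ 2)]
    rw [Finset.sum_congr rfl hfil, e0, add_zero, Finset.sum_const, hcard, nsmul_eq_mul]
    field_simp
  have hsum4₀ : ∑ j, h₀ j ^ 4 = 1 / (r:ℝ) := by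
    rw [← Finset.sum_filter_add_sum_filter_not Finset.univ (fun j => h₀ j ≠ 0)
      (fun j => h₀ j ^ 4)]
    have e : ∀ j ∈ Finset.univ.filter (fun j => h₀ j ≠ 0), h₀ j ^ 4 = 1 / (r:ℝ)^2 :=
      fun j hj => by
        rw [show h₀ j ^ 4 = (h₀ j ^ 2)^2 from by ring, hfil j hj, div_pow, one_pow]
    have e0 : ∑ j ∈ Finset.univ.filter (fun j => ¬ h₀ j ≠ 0), h₀ j ^ 4 = 0 :=
      Finset.sum_eq_zero fun j hj => by rw [hoff j hj]; norm_num
    rw [Finset.sum_congr rfl e, e0, add_zero, Finset.sum_const, hcard, nsmul_eq_mul]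
    field_simp
  have h0sqle : ∀ j, h₀ j ^ 2 ≤ 1 / (r:ℝ) := fun j => by
    rcases hsq01 j with h1 | h1
    · rw [h1]
      calc (0:ℝ) ^ 2 = 0 := by norm_num
      _ ≤ 1 / (r:ℝ) := le_of_lt (one_div_pos.mpr hr0)
    · rw [h1]
  have hdivsum : (1:ℝ)/r + ρ/r = (1+ρ)/r := by field_simp
  have hhsqle : ∀ j, h j ^ 2 ≤ (1 + ρ) / r := fun j => by
    have h1 := (abs_le.mp (hnb j)).2
    have h2 := h0sqle j
    linarith
  have henorm₀ : enorm2 h₀ = 1 := by rw [enorm2, hsum2₀, Real.sqrt_one]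
  -- part (i)
  have hsub : ∑ j, (h j - h₀ j) ^ 2 ≤ 2 * ρ := by
    have hS1 : ∑ j ∈ Finset.univ.filter (fun j => h₀ j ≠ 0), (h j - h₀ j) ^ 2 ≤ ρ := by
      calc ∑ j ∈ Finset.univ.filter (fun j => h₀ j ≠ 0), (h j - h₀ j) ^ 2
          ≤ ∑ __ ∈ Finset.univ.filter (fun j => h₀ j ≠ 0), ρ / r :=
            Finset.sum_le_sum fun j _ =>
              le_trans (Aux18.sq_sub_le_abs (halign j)) (hnb j)
      _ = ρ := by rw [Finset.sum_const, hcard, nsmul_eq_mul]; field_simp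
    have hS2 : ∑ j ∈ Finset.univ.filter (fun j => ¬ h₀ j ≠ 0), (h j - h₀ j) ^ 2 ≤ ρ := by
      have e : ∀ j ∈ Finset.univ.filter (fun j => ¬ h₀ j ≠ 0), (h j - h₀ j) ^ 2 = h j ^ 2 :=
        fun j hj => by rw [hoff j hj, sub_zero]
      rw [Finset.sum_congr rfl e]
      have hsplit := Finset.sum_filter_add_sum_filter_not Finset.univ
        (fun j => h₀ j ≠ 0) (fun j => h j ^ 2)
      have h1 : ∑ __ ∈ Finset.univ.filter (fun j => h₀ j ≠ 0), (1/(r:ℝ) - ρ/r)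
          ≤ ∑ j ∈ Finset.univ.filter (fun j => h₀ j ≠ 0), h j ^ 2 :=
        Finset.sum_le_sum fun j hj => by
          have ha := (abs_le.mp (hnb j)).1
          have hb := hfil j hj
          linarith
      rw [Finset.sum_const, hcard, nsmul_eq_mul] at h1
      have e2 : (r:ℝ) * (1/r - ρ/r) = 1 - ρ := by field_simp
      rw [hsum2h] at hsplit
      linarith
    have htot := Finset.sum_filter_add_sum_filter_not Finset.univ
      (fun j => h₀ j ≠ 0) (fun j => (h j - h₀ j) ^ 2)
    linarith
  have part1 : enorm2 (h - h₀) ≤ Real.sqrt (2 * ρ) := by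
    rw [enorm2]
    apply Real.sqrt_le_sqrt
    calc ∑ j, (h - h₀) j ^ 2 = ∑ j, (h j - h₀ j) ^ 2 :=
      Finset.sum_congr rfl fun j _ => by rw [Pi.sub_apply]
    _ ≤ 2 * ρ := hsub
  -- part (ii)
  have hquart := Aux18.quart_diff hnb hsum2h hsum2₀
  have part2 : |(∑ j, h j ^ 4) - 1 / (r : ℝ)| ≤ 3 * ρ / r := by
    rw [← hsum4₀]
    have hρr : (0:ℝ) ≤ ρ / r := by positivity
    calc |(∑ j, h j ^ 4) - ∑ j, h₀ j ^ 4| ≤ 2 * (ρ/r) := hquart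
    _ ≤ 3 * ρ / r := by rw [mul_div_assoc]; linarith
  have hc0 : 0 ≤ (n:ℝ) * θ * (1 - 3*θ) := by
    apply mul_nonneg (mul_nonneg (Nat.cast_nonneg n) hθ1.le)
    linarith
  -- part (iii)
  have part3 : spec (Mmat θ h - Mmat θ h₀) ≤
      ((n : ℝ) * θ * (1 - 3 * θ) / r) * (12 * ρ + 4 * Real.sqrt (2 * ρ)) := by
    rw [Aux18.Mmat_diff θ h h₀]
    set c := (n:ℝ) * θ * (1 - 3*θ) with hcdef
    set ε := Real.sqrt (2*ρ) with hεdef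
    have hε0 : 0 ≤ ε := Real.sqrt_nonneg _
    have hε2 : ε ^ 2 = 2*ρ := Real.sq_sqrt (by positivity)
    have hΔa : |(∑ j, h j ^ 4) - ∑ j, h₀ j ^ 4| ≤ 2 * (ρ/r) := hquart
    have ha0 : (0:ℝ) ≤ ∑ j, h j ^ 4 := Finset.sum_nonneg fun j _ => by positivity
    have ha : (∑ j, h j ^ 4) ≤ (1 + 2*ρ)/r := by
      have h1 := (abs_le.mp hΔa).2
      rw [hsum4₀] at h1
      have e : (1 + 2*ρ)/r = 1/r + 2*(ρ/r) := by field_simp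
      linarith
    have b1 : spec ((c * ((∑ j, h j ^ 4) - ∑ j, h₀ j ^ 4)) • (1 : Matrix (Fin n) (Fin n) ℝ))
        ≤ c * (2 * (ρ/r)) :=
      le_trans (Aux18.spec_smul_one_le _)
        (by rw [abs_mul, abs_of_nonneg hc0]; exact mul_le_mul_of_nonneg_left hΔa hc0)
    have b2 : spec ((c * (2 * ∑ j, h j ^ 4)) • Matrix.vecMulVec (h - h₀) h)
        ≤ c * (2 * ((1 + 2*ρ)/r)) * (ε * 1) := by
      refine le_trans (Aux18.spec_smul_vecMulVec_le _ _ _) ?_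
      rw [abs_mul, abs_of_nonneg hc0,
        abs_of_nonneg (by positivity : (0:ℝ) ≤ 2 * ∑ j, h j ^ 4), hh1]
      exact mul_le_mul (mul_le_mul_of_nonneg_left (by linarith) hc0)
        (mul_le_mul_of_nonneg_right part1 zero_le_one)
        (mul_nonneg (Aux18.enorm2_nonneg _) zero_le_one)
        (mul_nonneg hc0 (by positivity))
    have b3 : spec ((c * (2 * ∑ j, h j ^ 4)) • Matrix.vecMulVec h₀ (h - h₀))
        ≤ c * (2 * ((1 + 2*ρ)/r)) * (1 * ε) := by
      refine le_trans (Aux18.spec_smul_vecMulVec_le _ _ _) ?_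
      rw [abs_mul, abs_of_nonneg hc0,
        abs_of_nonneg (by positivity : (0:ℝ) ≤ 2 * ∑ j, h j ^ 4), henorm₀]
      exact mul_le_mul (mul_le_mul_of_nonneg_left (by linarith) hc0)
        (mul_le_mul_of_nonneg_left part1 zero_le_one)
        (mul_nonneg zero_le_one (Aux18.enorm2_nonneg _))
        (mul_nonneg hc0 (by positivity))
    have b4 : spec ((c * (2 * ((∑ j, h j ^ 4) - ∑ j, h₀ j ^ 4))) • Matrix.vecMulVec h₀ h₀)
        ≤ c * (2 * (2 * (ρ/r))) * (1 * 1) := by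
      refine le_trans (Aux18.spec_smul_vecMulVec_le _ _ _) ?_
      rw [henorm₀, abs_mul, abs_of_nonneg hc0, abs_mul,
        show |(2:ℝ)| = 2 from abs_two]
      apply mul_le_mul_of_nonneg_right ?_ (by norm_num)
      apply mul_le_mul_of_nonneg_left ?_ hc0
      exact mul_le_mul_of_nonneg_left hΔa (by norm_num)
    have b5 : spec ((c * (-3)) • Matrix.diagonal (fun j => h j ^ 2 - h₀ j ^ 2))
        ≤ c * 3 * (ρ/r) := by
      refine le_trans (Aux18.spec_smul_diagonal_le _ _ (by positivity) hnb) ?_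
      rw [abs_mul, abs_of_nonneg hc0, show |(-3:ℝ)| = 3 from by norm_num]
    refine le_trans (le_trans (Aux18.spec_add_le _ _)
      (add_le_add (le_trans (Aux18.spec_add_le _ _)
        (add_le_add (le_trans (Aux18.spec_add_le _ _)
          (add_le_add (le_trans (Aux18.spec_add_le _ _)
            (add_le_add b1 b2)) b3)) b4)) b5)) ?_
    have heq : c*(2*(ρ/r)) + c*(2*((1 + 2*ρ)/r))*(ε*1) + c*(2*((1 + 2*ρ)/r))*(1*ε)
        + c*(2*(2*(ρ/r)))*(1*1) + c*3*(ρ/r) = (c/(r:ℝ)) * (9*ρ + 4*ε + 8*ρ*ε) := by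
      field_simp
      ring
    rw [heq]
    exact mul_le_mul_of_nonneg_left (Aux18.num_iii hρ1 hρ2 hε0 hε2)
      (div_nonneg hc0 hr0.le)
  -- part (iv)
  have part4 : |minQuad (Mmat θ h) h - minQuad (Mmat θ h₀) h₀| ≤
      24 * Real.sqrt ρ * ((n : ℝ) * θ * (1 - 3 * θ) / r) := by
    have hd' : ∀ j, |h₀ j ^ 2 - h j ^ 2| ≤ ρ / r := fun j => by
      rw [abs_sub_comm]; exact hnb j
    have hsub' : ∑ j, (h₀ j - h j) ^ 2 ≤ 2 * ρ := by
      rw [Finset.sum_congr rfl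
        (fun j _ => show (h₀ j - h j)^2 = (h j - h₀ j)^2 from by ring)]
      exact hsub
    have h0m : ∀ j, h₀ j ^ 2 ≤ (1 + ρ) / r := fun j => by
      have := h0sqle j
      have h1 : (1:ℝ)/r ≤ (1+ρ)/r := by gcongr; linarith
      linarith
    have k1 := Aux18.key hn hc0 hρ1 hρ2 hr h h₀ hsum2h hsum2₀ hnb hsub h0m
    have k2 := Aux18.key hn hc0 hρ1 hρ2 hr h₀ h hsum2₀ hsum2h hd' hsub' hhsqle
    rw [abs_sub_le_iff]
    exact ⟨by linarith, by linarith⟩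
  exact ⟨part1, part2, part3, part4⟩
end
end
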